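/- arXiv:0804.1345 — 4 statements merged into one kernel-verified Lean document; each statement's English description precedes it below -/
import Mathlib

section
/- Let n ≥ 1 and let A⁰, A, B be real symmetric n×n matrices with A⁰ positive definite and B positive semidefinite. Then the following are equivalent: (i) no eigenvector of (A⁰)⁻¹A lies in the kernel of B; (ii) there exists a real skew-symmetric n×n matrix K such that the symmetric part of K(A⁰)⁻¹A + B, i.e. ℜ(K(A⁰)⁻¹A + B) := ½[(K(A⁰)⁻¹A + B) + (K(A⁰)⁻¹A + B)ᵀ], is positive definite, i.e. ℜ(K(A⁰)⁻¹A + B) ≥ θ₂ I for some θ₂ > 0. -/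
open Matrix


lemma posDef_mul_mul_transpose {n : ℕ} {S T X : Matrix (Fin n) (Fin n) ℝ}
    (hX : X.PosDef) (hTS : T * Sᵀ = 1) : (S * X * Sᵀ).PosDef := by
  have hXs : Xᵀ = X := by
    have := hX.isHermitian
    rwa [Matrix.IsHermitian, conjTranspose_eq_transpose_of_trivial] at this
  refine Matrix.PosDef.of_dotProduct_mulVec_pos ?_ ?_
  · rw [Matrix.IsHermitian, conjTranspose_eq_transpose_of_trivial]
    simp [Matrix.transpose_mul, Matrix.mul_assoc, hXs]
  · intro x hx
    have hSx : Sᵀ *ᵥ x ≠ 0 := by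
      intro h
      apply hx
      have h2 : T *ᵥ (Sᵀ *ᵥ x) = x := by
        rw [Matrix.mulVec_mulVec, hTS, Matrix.one_mulVec]
      rw [h, Matrix.mulVec_zero] at h2; exact h2.symm
    have h2 := hX.dotProduct_mulVec_pos hSx
    have key : star x ⬝ᵥ ((S * X * Sᵀ) *ᵥ x) = star (Sᵀ *ᵥ x) ⬝ᵥ (X *ᵥ (Sᵀ *ᵥ x)) := by
      simp only [star_trivial]
      rw [Matrix.mul_assoc, ← Matrix.mulVec_mulVec, Matrix.dotProduct_mulVec,
        ← Matrix.mulVec_mulVec]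
      congr 1
      rw [← Matrix.vecMul_transpose, Matrix.transpose_transpose]
    rw [key]; exact h2

lemma posDef_sub_smul_one {n : ℕ} (hn : 1 ≤ n) {X : Matrix (Fin n) (Fin n) ℝ} (hX : X.PosDef) :
    ∃ θ : ℝ, 0 < θ ∧ (X - θ • 1).PosSemidef := by
  have hne : (Finset.univ : Finset (Fin n)).Nonempty := ⟨⟨0, hn⟩, Finset.mem_univ _⟩
  have hH := hX.isHermitian
  set θ := Finset.univ.inf' hne hH.eigenvalues with hθ
  refine ⟨θ, ?_, ?_⟩
  · obtain ⟨i, _, hi⟩ := Finset.exists_mem_eq_inf' hne hH.eigenvalues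
    rw [hθ, hi]; exact hX.eigenvalues_pos i
  · set U := (hH.eigenvectorUnitary : Matrix (Fin n) (Fin n) ℝ) with hUdef
    have hU : U * star U = 1 := mem_unitaryGroup_iff.mp hH.eigenvectorUnitary.2
    have hspec : X = U * diagonal hH.eigenvalues * star U := by
      have := hH.spectral_theorem
      simpa [RCLike.ofReal_real_eq_id] using this
    have h1 : (θ • (1 : Matrix (Fin n) (Fin n) ℝ)) = U * diagonal (fun _ => θ) * star U := by
      rw [← smul_one_eq_diagonal, Matrix.mul_smul, mul_one, Matrix.smul_mul, hU]
    have hdiag : (diagonal (fun i => hH.eigenvalues i - θ) : Matrix (Fin n) (Fin n) ℝ)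
        = diagonal hH.eigenvalues - diagonal (fun _ => θ) := (diagonal_sub _ _).symm
    have key : X - θ • 1 = U * diagonal (fun i => hH.eigenvalues i - θ) * star U := by
      rw [hdiag, Matrix.mul_sub, Matrix.sub_mul, ← hspec, ← h1]
    rw [key]
    have hd : Matrix.PosSemidef (diagonal (fun i => hH.eigenvalues i - θ) : Matrix (Fin n) (Fin n) ℝ) := by
      refine Matrix.PosSemidef.diagonal ?_
      intro i
      simp only [Pi.zero_apply, sub_nonneg, hθ]
      exact Finset.inf'_le _ (Finset.mem_univ i)
    have := hd.mul_mul_conjTranspose_same U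
    rwa [← Matrix.star_eq_conjTranspose] at this

lemma kawashima_key {n : ℕ} (M Bt : Matrix (Fin n) (Fin n) ℝ)
    (hM : M.IsHermitian) (hBt : Bt.PosSemidef)
    (hyp : ∀ w : Fin n → ℝ, w ≠ 0 → (∃ μ : ℝ, M *ᵥ w = μ • w) → Bt *ᵥ w ≠ 0) :
    ∃ Kt : Matrix (Fin n) (Fin n) ℝ, Ktᵀ = -Kt ∧
      (((1:ℝ)/2) • (Kt * M + (Kt * M)ᵀ) + Bt).PosDef := by
  classical
  set U := (hM.eigenvectorUnitary : Matrix (Fin n) (Fin n) ℝ) with hUdef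
  have hU1 : U * Uᵀ = 1 := by
    have := mem_unitaryGroup_iff.mp hM.eigenvectorUnitary.2
    rwa [Matrix.star_eq_conjTranspose, conjTranspose_eq_transpose_of_trivial] at this
  have hU2 : Uᵀ * U = 1 := mul_eq_one_comm.mp hU1
  set lam := hM.eigenvalues with hlam
  have hspec : M = U * diagonal lam * Uᵀ := by
    have := hM.spectral_theorem
    rw [Unitary.conjStarAlgAut_apply, Matrix.star_eq_conjTranspose, conjTranspose_eq_transpose_of_trivial] at this
    simpa [RCLike.ofReal_real_eq_id] using this
  set C := Uᵀ * Bt * U with hCdef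
  have hC : C.PosSemidef := by
    have := hBt.conjTranspose_mul_mul_same U
    rwa [conjTranspose_eq_transpose_of_trivial] at this
  have hCsymm : ∀ i j, C j i = C i j := by
    intro i j
    have := hC.isHermitian
    rw [Matrix.IsHermitian, conjTranspose_eq_transpose_of_trivial] at this
    have h2 := congr_fun (congr_fun this j) i
    rw [transpose_apply] at h2
    exact h2.symm
  set Kd : Matrix (Fin n) (Fin n) ℝ :=
    Matrix.of fun i j => if lam i = lam j then 0 else 2 * C i j / (lam i - lam j) with hKd
  set Cb : Matrix (Fin n) (Fin n) ℝ :=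
    Matrix.of fun i j => if lam i = lam j then C i j else 0 with hCb
  -- skewness of Kd
  have hKdskew : Kdᵀ = -Kd := by
    ext i j
    simp only [transpose_apply, Matrix.neg_apply, hKd, Matrix.of_apply]
    by_cases h : lam i = lam j
    · rw [if_pos h.symm, if_pos h, neg_zero]
    · have h' : ¬ lam j = lam i := fun hh => h hh.symm
      rw [if_neg h, if_neg h', hCsymm i j]
      rw [show lam j - lam i = -(lam i - lam j) by ring, div_neg]
  -- the block identity
  have hblock : ((1:ℝ)/2) • (Kd * diagonal lam + (Kd * diagonal lam)ᵀ) + C = Cb := by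
    ext i j
    simp only [Matrix.add_apply, Matrix.smul_apply, Matrix.transpose_apply, Matrix.mul_diagonal,
      hKd, hCb, Matrix.of_apply, smul_eq_mul]
    by_cases h : lam i = lam j
    · have h' : lam j = lam i := h.symm
      rw [if_pos h, if_pos h', if_pos h]
      ring
    · have h' : ¬ lam j = lam i := fun hh => h hh.symm
      have hsub : lam i - lam j ≠ 0 := sub_ne_zero.mpr h
      have hsub' : lam j - lam i ≠ 0 := sub_ne_zero.mpr h'
      rw [if_neg h, if_neg h', if_neg h, hCsymm i j]
      field_simp
      ring
  -- Cb is positive definite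
  have hCbsymm : Cbᵀ = Cb := by
    ext i j
    simp only [transpose_apply, hCb, Matrix.of_apply]
    by_cases h : lam i = lam j
    · rw [if_pos h, if_pos h.symm, hCsymm i j]
    · rw [if_neg h, if_neg (fun hh => h hh.symm)]
  have hCbpos : Cb.PosDef := by
    refine Matrix.PosDef.of_dotProduct_mulVec_pos ?_ ?_
    · rw [Matrix.IsHermitian, conjTranspose_eq_transpose_of_trivial]; exact hCbsymm
    · intro v hv
      simp only [star_trivial]
      set w : ℝ → (Fin n → ℝ) := fun μ i => if lam i = μ then v i else 0 with hw
      have key : ∀ i j : Fin n, ∑ μ ∈ Finset.image lam Finset.univ,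
          (w μ i) * (C i j * w μ j) = v i * (Cb i j * v j) := by
        intro i j
        rw [Finset.sum_eq_single (lam i)]
        · simp only [hw, if_pos rfl, hCb, Matrix.of_apply]
          by_cases h : lam i = lam j
          · rw [if_pos h.symm, if_pos h]
          · rw [if_neg (fun hh => h hh.symm), if_neg h]; ring
        · intro μ _ hne
          have hzero : w μ i = 0 := by
            simp only [hw]
            exact if_neg (fun h => hne h.symm)
          rw [hzero, zero_mul]
        · intro h
          exact absurd (Finset.mem_image_of_mem lam (Finset.mem_univ i)) h
      have expand : v ⬝ᵥ Cb *ᵥ v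
          = ∑ μ ∈ Finset.image lam Finset.univ, (w μ) ⬝ᵥ C *ᵥ (w μ) := by
        calc v ⬝ᵥ Cb *ᵥ v = ∑ i, ∑ j, v i * (Cb i j * v j) := by
              simp [dotProduct, mulVec, Finset.mul_sum]
          _ = ∑ i, ∑ j, ∑ μ ∈ Finset.image lam Finset.univ, (w μ i) * (C i j * w μ j) := by
              simp_rw [key]
          _ = ∑ i, ∑ μ ∈ Finset.image lam Finset.univ, ∑ j, (w μ i) * (C i j * w μ j) := by
              exact Finset.sum_congr rfl fun i _ => Finset.sum_comm
          _ = ∑ μ ∈ Finset.image lam Finset.univ, ∑ i, ∑ j, (w μ i) * (C i j * w μ j) :=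
              Finset.sum_comm
          _ = ∑ μ ∈ Finset.image lam Finset.univ, (w μ) ⬝ᵥ C *ᵥ (w μ) := by
              simp [dotProduct, mulVec, Finset.mul_sum]
      rw [expand]
      -- each term is nonnegative
      have hnonneg : ∀ μ ∈ Finset.image lam Finset.univ, 0 ≤ (w μ) ⬝ᵥ C *ᵥ (w μ) := by
        intro μ _
        have := hC.dotProduct_mulVec_nonneg (w μ)
        simpa using this
      -- the term at μ₀ is positive
      obtain ⟨i₀, hi₀⟩ := Function.ne_iff.mp hv
      have hi₀' : v i₀ ≠ 0 := by simpa using hi₀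
      set μ₀ := lam i₀ with hμ₀
      have hwne : w μ₀ ≠ 0 := by
        intro h
        have := congr_fun h i₀
        simp [hw, hμ₀] at this
        exact hi₀' this
      have hMU : M * U = U * diagonal lam := by
        rw [hspec, Matrix.mul_assoc, Matrix.mul_assoc, hU2, mul_one]
      have hDw : diagonal lam *ᵥ (w μ₀) = μ₀ • (w μ₀) := by
        funext i
        simp only [mulVec_diagonal, Pi.smul_apply, smul_eq_mul, hw]
        by_cases h : lam i = μ₀
        · rw [if_pos h, h]
        · rw [if_neg h]; ring
      have hUw : U *ᵥ (w μ₀) ≠ 0 := by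
        intro h
        apply hwne
        have h2 : Uᵀ *ᵥ (U *ᵥ (w μ₀)) = w μ₀ := by
          rw [Matrix.mulVec_mulVec, hU2, Matrix.one_mulVec]
        rw [h, Matrix.mulVec_zero] at h2; exact h2.symm
      have heig : M *ᵥ (U *ᵥ (w μ₀)) = μ₀ • (U *ᵥ (w μ₀)) := by
        rw [Matrix.mulVec_mulVec, hMU, ← Matrix.mulVec_mulVec, hDw, Matrix.mulVec_smul]
      have hBUw : Bt *ᵥ (U *ᵥ (w μ₀)) ≠ 0 := hyp _ hUw ⟨μ₀, heig⟩
      have hpos : 0 < (U *ᵥ (w μ₀)) ⬝ᵥ Bt *ᵥ (U *ᵥ (w μ₀)) := by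
        have h1 := hBt.dotProduct_mulVec_nonneg (U *ᵥ (w μ₀))
        simp only [star_trivial] at h1
        rcases lt_or_eq_of_le h1 with h | h
        · exact h
        · exfalso
          apply hBUw
          have := (hBt.dotProduct_mulVec_zero_iff (U *ᵥ (w μ₀))).mp
          simp only [star_trivial] at this
          exact this h.symm
      have htrans : (w μ₀) ⬝ᵥ C *ᵥ (w μ₀) = (U *ᵥ (w μ₀)) ⬝ᵥ Bt *ᵥ (U *ᵥ (w μ₀)) := by
        rw [hCdef, Matrix.mul_assoc, ← Matrix.mulVec_mulVec, Matrix.dotProduct_mulVec,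
          ← Matrix.mulVec_mulVec, Matrix.vecMul_transpose]
      refine Finset.sum_pos' hnonneg ⟨μ₀, ?_, ?_⟩
      · exact Finset.mem_image_of_mem lam (Finset.mem_univ i₀)
      · rw [htrans]; exact hpos
  -- assemble
  have e2 : ∀ X : Matrix (Fin n) (Fin n) ℝ, Uᵀ * (U * X) = X := fun X => by
    rw [← Matrix.mul_assoc, hU2, one_mul]
  have hBtC : U * C * Uᵀ = Bt := by
    rw [hCdef, ← Matrix.mul_assoc, ← Matrix.mul_assoc, hU1, one_mul, Matrix.mul_assoc, hU1,
      mul_one]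
  have hKtM : (U * Kd * Uᵀ) * M = U * (Kd * diagonal lam) * Uᵀ := by
    rw [hspec]
    simp only [Matrix.mul_assoc, e2]
  refine ⟨U * Kd * Uᵀ, ?_, ?_⟩
  · rw [Matrix.transpose_mul, Matrix.transpose_mul, Matrix.transpose_transpose, hKdskew,
      Matrix.neg_mul, Matrix.mul_neg, Matrix.mul_assoc]
  · have hfinal : ((1:ℝ)/2) • ((U * Kd * Uᵀ) * M + ((U * Kd * Uᵀ) * M)ᵀ) + Bt
        = U * Cb * Uᵀ := by
      rw [hKtM, ← hBtC, ← hblock]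
      rw [Matrix.transpose_mul, Matrix.transpose_mul, Matrix.transpose_transpose]
      simp only [Matrix.mul_add, Matrix.add_mul, Matrix.mul_smul, Matrix.smul_mul,
        smul_add, Matrix.mul_assoc]
    rw [hfinal]
    exact posDef_mul_mul_transpose hCbpos hU1

/-- Kawashima compensating-matrix lemma: for `A⁰, A, B` real symmetric with `A⁰ > 0` and
`B ≥ 0`, no eigenvector of `(A⁰)⁻¹A` lies in `ker B` iff there exists a skew-symmetric `K`
with the symmetric part of `K(A⁰)⁻¹A + B` positive definite (`≥ θ₂ I`, some `θ₂ > 0`). -/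
theorem kawashima_compensating_matrix (n : ℕ) (hn : 1 ≤ n)
    (A0 A B : Matrix (Fin n) (Fin n) ℝ)
    (hA0sym : A0.IsSymm) (hAsym : A.IsSymm) (hBsym : B.IsSymm)
    (hA0 : A0.PosDef) (hB : B.PosSemidef) :
    (∀ v : Fin n → ℝ, v ≠ 0 → (∃ μ : ℝ, (A0⁻¹ * A).mulVec v = μ • v) → B.mulVec v ≠ 0) ↔
    (∃ K : Matrix (Fin n) (Fin n) ℝ, Kᵀ = -K ∧ ∃ θ₂ : ℝ, 0 < θ₂ ∧
      (((1:ℝ)/2) • ((K * A0⁻¹ * A + B) + (K * A0⁻¹ * A + B)ᵀ)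
        - θ₂ • (1 : Matrix (Fin n) (Fin n) ℝ)).PosSemidef) := by
  constructor
  · -- hard direction
    intro hyp
    have hA0psd := hA0.posSemidef
    open MatrixOrder in
    obtain ⟨S, hSdef⟩ : ∃ S, S = CFC.sqrt A0 := ⟨_, rfl⟩
    have hSS : S * S = A0 := by
      rw [hSdef]
      open MatrixOrder in
      exact CFC.sqrt_mul_sqrt_self A0 (Matrix.nonneg_iff_posSemidef.mpr hA0psd)
    have hSsym : Sᵀ = S := by
      open MatrixOrder in
      have := (Matrix.nonneg_iff_posSemidef.mp (CFC.sqrt_nonneg A0)).isHermitian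
      rw [Matrix.IsHermitian, conjTranspose_eq_transpose_of_trivial] at this
      rw [hSdef]; exact this
    have hA0det : IsUnit A0.det := isUnit_iff_ne_zero.mpr (ne_of_gt hA0.det_pos)
    obtain ⟨T, hTdef⟩ : ∃ T, T = S * A0⁻¹ := ⟨_, rfl⟩
    have hST : S * T = 1 := by
      rw [hTdef, ← Matrix.mul_assoc, hSS, Matrix.mul_nonsing_inv _ hA0det]
    have hTS : T * S = 1 := mul_eq_one_comm.mp hST
    have hinvcomm : A0⁻¹ * S = S * A0⁻¹ := by
      have hcomm : S * A0 = A0 * S := by rw [← hSS, Matrix.mul_assoc]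
      have h2 : A0⁻¹ * (S * A0 * A0⁻¹) = A0⁻¹ * (A0 * S * A0⁻¹) := by rw [hcomm]
      rw [Matrix.mul_assoc S A0 A0⁻¹, Matrix.mul_nonsing_inv _ hA0det, Matrix.mul_one,
        Matrix.mul_assoc A0 S A0⁻¹, ← Matrix.mul_assoc A0⁻¹ A0 (S * A0⁻¹),
        Matrix.nonsing_inv_mul _ hA0det, one_mul] at h2
      exact h2
    have hTsym : Tᵀ = T := by
      rw [hTdef, Matrix.transpose_mul, Matrix.transpose_nonsing_inv, hA0sym, hSsym, hinvcomm]
    have hA0inv : A0⁻¹ = T * T := by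
      refine Matrix.inv_eq_right_inv ?_
      rw [← hSS, Matrix.mul_assoc, ← Matrix.mul_assoc S T T, hST, one_mul, hST]
    obtain ⟨Mt, hMtdef⟩ : ∃ Mt, Mt = T * A * T := ⟨_, rfl⟩
    obtain ⟨Bt, hBtdef⟩ : ∃ Bt, Bt = T * B * T := ⟨_, rfl⟩
    have hMt : Mt.IsHermitian := by
      rw [Matrix.IsHermitian, conjTranspose_eq_transpose_of_trivial, hMtdef,
        Matrix.transpose_mul (T * A) T, Matrix.transpose_mul T A, hTsym, hAsym,
        ← Matrix.mul_assoc]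
    have hBt : Bt.PosSemidef := by
      have := hB.conjTranspose_mul_mul_same T
      rw [conjTranspose_eq_transpose_of_trivial, hTsym] at this
      rw [hBtdef]; exact this
    -- transfer the hypothesis
    have hyp' : ∀ w : Fin n → ℝ, w ≠ 0 → (∃ μ : ℝ, Mt *ᵥ w = μ • w) → Bt *ᵥ w ≠ 0 := by
      rintro w hw ⟨μ, hμ⟩
      have hv : T *ᵥ w ≠ 0 := by
        intro h
        apply hw
        have h2 : S *ᵥ (T *ᵥ w) = w := by rw [Matrix.mulVec_mulVec, hST, Matrix.one_mulVec]
        rw [h, Matrix.mulVec_zero] at h2; exact h2.symm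
      have hmul : A0⁻¹ * A * T = T * Mt := by
        rw [hA0inv, hMtdef]; simp only [Matrix.mul_assoc]
      have heig : (A0⁻¹ * A) *ᵥ (T *ᵥ w) = μ • (T *ᵥ w) := by
        rw [Matrix.mulVec_mulVec, hmul, ← Matrix.mulVec_mulVec, hμ, Matrix.mulVec_smul]
      have hBv := hyp (T *ᵥ w) hv ⟨μ, heig⟩
      intro hcon
      apply hBv
      have h3 : Bt *ᵥ w = T *ᵥ (B *ᵥ (T *ᵥ w)) := by
        rw [hBtdef, Matrix.mulVec_mulVec, Matrix.mulVec_mulVec]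
      have h4 : S *ᵥ (Bt *ᵥ w) = B *ᵥ (T *ᵥ w) := by
        rw [h3, Matrix.mulVec_mulVec, hST, Matrix.one_mulVec]
      rw [hcon, Matrix.mulVec_zero] at h4
      exact h4.symm
    obtain ⟨Kt, hKtskew, hKtpos⟩ := kawashima_key Mt Bt hMt hBt hyp'
    have hBtsym : Btᵀ = Bt := by
      have := hBt.isHermitian
      rwa [Matrix.IsHermitian, conjTranspose_eq_transpose_of_trivial] at this
    refine ⟨S * Kt * S, ?_, ?_⟩
    · rw [Matrix.transpose_mul (S * Kt) S, Matrix.transpose_mul S Kt, hSsym, hKtskew,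
        Matrix.neg_mul, Matrix.mul_neg, ← Matrix.mul_assoc]
    · -- identify the symmetric part
      have eST : ∀ X : Matrix (Fin n) (Fin n) ℝ, S * (T * X) = X := fun X => by
        rw [← Matrix.mul_assoc, hST, one_mul]
      have eTS : ∀ X : Matrix (Fin n) (Fin n) ℝ, T * (S * X) = X := fun X => by
        rw [← Matrix.mul_assoc, hTS, one_mul]
      have hKM : S * Kt * S * A0⁻¹ * A = S * (Kt * Mt) * S := by
        rw [hA0inv, hMtdef]
        simp only [Matrix.mul_assoc, eST, eTS, hST, hTS, Matrix.mul_one]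
      have hBS : B = S * Bt * S := by
        rw [hBtdef]
        simp only [Matrix.mul_assoc, eST, eTS, hST, hTS, Matrix.mul_one]
      have hW : S * Kt * S * A0⁻¹ * A + B = S * (Kt * Mt + Bt) * S := by
        rw [hKM, Matrix.mul_add, Matrix.add_mul]
        rw [hBS]
      have hWt : (S * (Kt * Mt + Bt) * S)ᵀ = S * ((Kt * Mt)ᵀ + Bt) * S := by
        rw [Matrix.transpose_mul (S * (Kt * Mt + Bt)) S, Matrix.transpose_mul S (Kt * Mt + Bt),
          hSsym, Matrix.transpose_add, hBtsym, ← Matrix.mul_assoc]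
      have hfinal : ((1:ℝ)/2) • ((S * Kt * S * A0⁻¹ * A + B) + (S * Kt * S * A0⁻¹ * A + B)ᵀ)
          = S * (((1:ℝ)/2) • (Kt * Mt + (Kt * Mt)ᵀ) + Bt) * S := by
        rw [hW, hWt]
        simp only [Matrix.mul_add, Matrix.add_mul, Matrix.mul_smul, Matrix.smul_mul, smul_add]
        module
      rw [hfinal]
      have hcong : (S * (((1:ℝ)/2) • (Kt * Mt + (Kt * Mt)ᵀ) + Bt) * S).PosDef := by
        have h5 := posDef_mul_mul_transpose hKtpos (T := T) (S := S) (by rw [hSsym]; exact hTS)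
        rwa [hSsym] at h5
      obtain ⟨θ, hθ, hpsd⟩ := posDef_sub_smul_one hn hcong
      exact ⟨θ, hθ, hpsd⟩
  · -- easy direction
    rintro ⟨K, hK, θ, hθ, hpsd⟩ v hv ⟨μ, hμ⟩ hBv
    have h := hpsd.dotProduct_mulVec_nonneg v
    simp only [star_trivial] at h
    set W := K * A0⁻¹ * A + B with hW
    have hdot : ∀ X : Matrix (Fin n) (Fin n) ℝ, v ⬝ᵥ Xᵀ *ᵥ v = v ⬝ᵥ X *ᵥ v := by
      intro X
      rw [Matrix.dotProduct_mulVec, Matrix.vecMul_transpose, dotProduct_comm]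
    have hWv : v ⬝ᵥ W *ᵥ v = 0 := by
      rw [hW, Matrix.add_mulVec, dotProduct_add, hBv, dotProduct_zero, add_zero,
        Matrix.mul_assoc, ← Matrix.mulVec_mulVec, hμ, Matrix.mulVec_smul, dotProduct_smul]
      have hskew : v ⬝ᵥ K *ᵥ v = 0 := by
        have h1 : v ⬝ᵥ Kᵀ *ᵥ v = v ⬝ᵥ K *ᵥ v := hdot K
        rw [hK, Matrix.neg_mulVec, dotProduct_neg] at h1
        linarith
      rw [hskew, smul_zero]
    have hvv : 0 < v ⬝ᵥ v := by
      have h0 : 0 ≤ v ⬝ᵥ v := Finset.sum_nonneg fun i _ => mul_self_nonneg _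
      have hne : v ⬝ᵥ v ≠ 0 := fun hc => hv (dotProduct_self_eq_zero.mp hc)
      exact lt_of_le_of_ne h0 (Ne.symm hne)
    have hexpand : v ⬝ᵥ ((((1:ℝ)/2) • (W + Wᵀ) - θ • 1) *ᵥ v) = - (θ * (v ⬝ᵥ v)) := by
      rw [Matrix.sub_mulVec, dotProduct_sub, Matrix.smul_mulVec, dotProduct_smul,
        Matrix.add_mulVec, dotProduct_add, hdot W, hWv, Matrix.smul_mulVec,
        Matrix.one_mulVec, dotProduct_smul]
      simp [smul_eq_mul]
    rw [hexpand] at h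
    nlinarith
end

section
/- Let 0 < a₀ ≤ a₁ and let A_* : ℝ → ℝ be Lipschitz with a₀ ≤ A_*(y) ≤ a₁ for all y. Let θ > 0. Then there exist constants C > 0 and θ′ > 0 (depending only on a₀, a₁, θ) with the following property: for all t > 0, all x ≥ 0, every differentiable z : [0,t] → ℝ with z′(s) = A_*(z(s)) for all s and z(t) = x, and every function U₀ : ℝ → ℝ satisfying |U₀(y)| ≤ E₀ (1 + |y|)^{−3/2} for all y (some E₀ ≥ 0), one has e^{−θ (x − z(0))} |U₀(z(0))| ≤ C E₀ e^{−θ′ t} (1 + x)^{−3/2}. -/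
open Real Set

/-- Transport along backward characteristics of `dz/ds = A_*(z)` with exponentially decaying
amplitude, applied to algebraically decaying data, yields the bound
`e^{−θ(x−z(0))} |U₀(z(0))| ≤ C E₀ e^{−θ′ t} (1+x)^{−3/2}`. -/
theorem characteristic_transport_bound (a₀ a₁ θ : ℝ) (ha₀ : 0 < a₀) (ha₀₁ : a₀ ≤ a₁)
    (hθ : 0 < θ) :
    ∃ C θ' : ℝ, 0 < C ∧ 0 < θ' ∧
      ∀ (Astar : ℝ → ℝ) (L : NNReal), LipschitzWith L Astar →
        (∀ y : ℝ, a₀ ≤ Astar y ∧ Astar y ≤ a₁) →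
        ∀ t : ℝ, 0 < t → ∀ x : ℝ, 0 ≤ x →
        ∀ z : ℝ → ℝ, (∀ s ∈ Icc (0:ℝ) t, HasDerivAt z (Astar (z s)) s) → z t = x →
        ∀ (U₀ : ℝ → ℝ) (E₀ : ℝ), 0 ≤ E₀ →
          (∀ y : ℝ, |U₀ y| ≤ E₀ * (1 + |y|) ^ (-(3:ℝ)/2)) →
          Real.exp (-θ * (x - z 0)) * |U₀ (z 0)| ≤
            C * E₀ * Real.exp (-θ' * t) * (1 + x) ^ (-(3:ℝ)/2) := by
  have ha₁ : 0 < a₁ := lt_of_lt_of_le ha₀ ha₀₁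
  refine ⟨(1 + 3 * a₁ / (θ * a₀)) ^ ((3:ℝ)/2), θ * a₀ / 2, by positivity, by positivity,
    ?_⟩
  intro Astar L hL hbound t ht x hx z hz hzt U₀ E₀ hE₀ hU
  set C : ℝ := (1 + 3 * a₁ / (θ * a₀)) ^ ((3:ℝ)/2) with hC
  -- derivative bounds on Icc 0 t
  have hIcc : Convex ℝ (Icc (0:ℝ) t) := convex_Icc 0 t
  have hcont : ContinuousOn z (Icc (0:ℝ) t) := fun s hs =>
    (hz s hs).continuousAt.continuousWithinAt
  have hdiff : DifferentiableOn ℝ z (interior (Icc (0:ℝ) t)) := fun s hs =>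
    ((hz s (interior_subset hs)).differentiableAt).differentiableWithinAt
  have hderiv : ∀ s ∈ interior (Icc (0:ℝ) t), deriv z s = Astar (z s) := fun s hs =>
    (hz s (interior_subset hs)).deriv
  have h0mem : (0:ℝ) ∈ Icc (0:ℝ) t := ⟨le_refl 0, ht.le⟩
  have htmem : t ∈ Icc (0:ℝ) t := ⟨ht.le, le_refl t⟩
  have hlow : a₀ * t ≤ z t - z 0 := by
    have := hIcc.mul_sub_le_image_sub_of_le_deriv hcont hdiff
      (fun s hs => (hderiv s hs) ▸ (hbound (z s)).1) 0 h0mem t htmem ht.le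
    simpa using this
  have hup : z t - z 0 ≤ a₁ * t := by
    have := hIcc.image_sub_le_mul_sub_of_deriv_le hcont hdiff
      (fun s hs => (hderiv s hs) ▸ (hbound (z s)).2) 0 h0mem t htmem ht.le
    simpa using this
  rw [hzt] at hlow hup
  -- exponential bound
  have hexp : Real.exp (-θ * (x - z 0)) ≤ Real.exp (-(θ * a₀ * t)) := by
    apply Real.exp_le_exp.2
    nlinarith
  -- data bound
  have hUz := hU (z 0)
  -- polynomial comparison
  have hb : (0:ℝ) < 1 + |z 0| := by positivity
  have hp : (0:ℝ) < 1 + a₁ * t := by positivity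
  have hq : (0:ℝ) < 1 + x := by positivity
  have hqle : 1 + x ≤ (1 + |z 0|) * (1 + a₁ * t) := by
    have : x ≤ |z 0| + a₁ * t := by
      have := abs_nonneg (z 0)
      have := le_abs_self (z 0)
      nlinarith
    nlinarith [abs_nonneg (z 0), mul_nonneg ha₁.le ht.le, mul_nonneg (abs_nonneg (z 0)) (mul_nonneg ha₁.le ht.le)]
  have hkey : (1 + |z 0|) ^ (-(3:ℝ)/2) ≤ (1 + a₁ * t) ^ ((3:ℝ)/2) * (1 + x) ^ (-(3:ℝ)/2) := by
    have hqpow : (1 + x) ^ ((3:ℝ)/2) ≤ (1 + a₁ * t) ^ ((3:ℝ)/2) * (1 + |z 0|) ^ ((3:ℝ)/2) := by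
      rw [← Real.mul_rpow hp.le hb.le]
      exact Real.rpow_le_rpow hq.le (by nlinarith) (by norm_num)
    have hne : (-(3:ℝ)/2) = -((3:ℝ)/2) := by ring
    rw [hne, Real.rpow_neg hb.le, Real.rpow_neg hq.le, inv_eq_one_div, ← div_eq_mul_inv,
      div_le_div_iff₀ (by positivity) (by positivity), one_mul]
    exact hqpow
  -- growth bound: (1+a₁t)^{3/2} ≤ C exp(θa₀t/2)
  have hgrow : (1 + a₁ * t) ^ ((3:ℝ)/2) ≤ C * Real.exp (θ * a₀ / 2 * t) := by
    have hδ : (0:ℝ) < θ * a₀ / 3 := by positivity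
    have h1 : 1 + a₁ * t ≤ (1 + 3 * a₁ / (θ * a₀)) * Real.exp (θ * a₀ / 3 * t) := by
      have hu := Real.add_one_le_exp (θ * a₀ / 3 * t)
      have he1 : (1:ℝ) ≤ Real.exp (θ * a₀ / 3 * t) := by
        rw [Real.one_le_exp_iff]; positivity
      have key : a₁ * t ≤ 3 * a₁ / (θ * a₀) * Real.exp (θ * a₀ / 3 * t) := by
        have : a₁ * t = 3 * a₁ / (θ * a₀) * (θ * a₀ / 3 * t) := by
          field_simp
        rw [this]
        apply mul_le_mul_of_nonneg_left _ (by positivity)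
        linarith
      nlinarith
    calc (1 + a₁ * t) ^ ((3:ℝ)/2)
        ≤ ((1 + 3 * a₁ / (θ * a₀)) * Real.exp (θ * a₀ / 3 * t)) ^ ((3:ℝ)/2) :=
          Real.rpow_le_rpow (by positivity) h1 (by norm_num)
      _ = C * (Real.exp (θ * a₀ / 3 * t)) ^ ((3:ℝ)/2) := by
          rw [Real.mul_rpow (by positivity) (Real.exp_pos _).le]
      _ = C * Real.exp (θ * a₀ / 2 * t) := by
          rw [← Real.exp_mul]; ring_nf
  have hCpos : (0:ℝ) < C := by rw [hC]; positivity
  -- combine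
  calc Real.exp (-θ * (x - z 0)) * |U₀ (z 0)|
      ≤ Real.exp (-(θ * a₀ * t)) * (E₀ * (1 + |z 0|) ^ (-(3:ℝ)/2)) :=
        mul_le_mul hexp hUz (abs_nonneg _) (Real.exp_pos _).le
    _ ≤ Real.exp (-(θ * a₀ * t)) * (E₀ * ((1 + a₁ * t) ^ ((3:ℝ)/2) * (1 + x) ^ (-(3:ℝ)/2))) := by
        apply mul_le_mul_of_nonneg_left _ (Real.exp_pos _).le
        exact mul_le_mul_of_nonneg_left hkey hE₀
    _ ≤ Real.exp (-(θ * a₀ * t)) * (E₀ * ((C * Real.exp (θ * a₀ / 2 * t)) * (1 + x) ^ (-(3:ℝ)/2))) := by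
        apply mul_le_mul_of_nonneg_left _ (Real.exp_pos _).le
        apply mul_le_mul_of_nonneg_left _ hE₀
        exact mul_le_mul_of_nonneg_right hgrow (by positivity)
    _ = C * E₀ * (Real.exp (-(θ * a₀ * t)) * Real.exp (θ * a₀ / 2 * t)) * (1 + x) ^ (-(3:ℝ)/2) := by
        ring
    _ = C * E₀ * Real.exp (-(θ * a₀ / 2) * t) * (1 + x) ^ (-(3:ℝ)/2) := by
        rw [← Real.exp_add]; ring_nf
end

section
/- Fix real constants a₁ < a₂ < ⋯ < a_n with a_n > 0 and at least one a_j > 0, constants 0 < a₀ ≤ a₁′, and η > 0. Define ψ₁(x,t) := χ(x,t) Σ_{j : a_j > 0} (1 + |x| + t)^{−1/2} (1 + |x − a_j t|)^{−1/2} and ψ₂(x,t) := (1 − χ(x,t)) (1 + |x − a_n t| + t^{1/2})^{−3/2}, where χ(x,t) = 1 if 0 ≤ x ≤ a_n t and χ(x,t) = 0 otherwise. Then there exists a constant C > 0 such that for every ā ∈ [a₀, a₁′] and all x ≥ 0, t ≥ 0, e^{−η x} (1 + |x − ā t|)^{−1} ≤ C (ψ₁ + ψ₂)(x,t). -/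
open Real Set

/-- Inner algebraic part `ψ₁` of the pointwise ansatz. -/
noncomputable def psi1 (n : ℕ) (a : Fin (n + 1) → ℝ) (x t : ℝ) : ℝ :=
  (if 0 ≤ x ∧ x ≤ a (Fin.last n) * t then (1:ℝ) else 0) *
    ∑ j : Fin (n + 1),
      if 0 < a j then (1 + |x| + t) ^ (-(1:ℝ)/2) * (1 + |x - a j * t|) ^ (-(1:ℝ)/2) else 0

/-- Outer algebraic part `ψ₂` of the pointwise ansatz. -/
noncomputable def psi2 (n : ℕ) (a : Fin (n + 1) → ℝ) (x t : ℝ) : ℝ :=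
  (1 - if 0 ≤ x ∧ x ≤ a (Fin.last n) * t then (1:ℝ) else 0) *
    (1 + |x - a (Fin.last n) * t| + t ^ ((1:ℝ)/2)) ^ (-(3:ℝ)/2)

/-- Boundary estimate: a contribution `e^{−ηx}(1+|x−ā t|)^{−1}` transported from the boundary
at averaged speed `ā ∈ [a₀, a₁']` is dominated by `C (ψ₁ + ψ₂)(x,t)`. -/
theorem boundary_transport_dominated (n : ℕ) (a : Fin (n + 1) → ℝ) (ha : StrictMono a)
    (han : 0 < a (Fin.last n)) (hpos : ∃ j, 0 < a j)
    (a₀ a₁' η : ℝ) (ha₀ : 0 < a₀) (ha₀₁ : a₀ ≤ a₁') (hη : 0 < η) :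
    ∃ C : ℝ, 0 < C ∧ ∀ abar ∈ Icc a₀ a₁', ∀ x ≥ (0:ℝ), ∀ t ≥ (0:ℝ),
      Real.exp (-η * x) * (1 + |x - abar * t|)⁻¹ ≤ C * (psi1 n a x t + psi2 n a x t) := by
  set A := a (Fin.last n) with hAdef
  have hA : 0 < A := han
  set m := min 1 (η/2) with hmdef
  have hm : 0 < m := lt_min one_pos (by positivity)
  set K := m⁻¹ ^ 2 with hKdef
  have hK : 0 < K := by positivity
  have key : ∀ x : ℝ, 0 ≤ x → (1+x)^2 ≤ K * Real.exp (η*x) := by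
    intro x hx
    have he : η*x/2 + 1 ≤ Real.exp (η*x/2) := Real.add_one_le_exp _
    have hexp : Real.exp (η*x) = Real.exp (η*x/2) * Real.exp (η*x/2) := by
      rw [← Real.exp_add]; ring_nf
    have hm1 : m ≤ 1 := min_le_left _ _
    have hm2 : m ≤ η/2 := min_le_right _ _
    have h1 : m*(1+x) ≤ Real.exp (η*x/2) := by nlinarith
    have h3 : m^2*(1+x)^2 ≤ Real.exp (η*x) := by
      rw [hexp]; nlinarith [mul_pos hm (show (0:ℝ) < 1 + x by linarith)]
    have hmK : K * m^2 = 1 := by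
      rw [hKdef]; field_simp
    nlinarith [mul_le_mul_of_nonneg_left h3 hK.le]
  set M := max 1 a₀⁻¹ with hMdef
  have hM1 : (1:ℝ) ≤ M := le_max_left _ _
  have hM0 : (0:ℝ) ≤ M := by linarith
  have hMa : (1:ℝ) ≤ a₀ * M := by
    calc (1:ℝ) = a₀ * a₀⁻¹ := (mul_inv_cancel₀ ha₀.ne').symm
    _ ≤ a₀ * M := by gcongr; exact le_max_right _ _
  set C₁ := (1+A) * (M*K) with hC₁def
  have hC₁ : 0 < C₁ := by positivity
  set C₂ := (2*(1+A⁻¹))^2 * K with hC₂def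
  have hC₂ : 0 < C₂ := by positivity
  set C := max C₁ C₂ with hCdef
  have hC : 0 < C := lt_of_lt_of_le hC₁ (le_max_left _ _)
  have hC₁C : C₁ ≤ C := le_max_left _ _
  have hC₂C : C₂ ≤ C := le_max_right _ _
  clear_value m K M C₁ C₂ C
  refine ⟨C, hC, ?_⟩
  rintro abar ⟨hab1, hab2⟩ x hx t ht
  set d := |x - abar*t| with hddef
  have hd0 : 0 ≤ d := abs_nonneg _
  set E := Real.exp (η*x) * (1+d) with hEdef
  have hEpos : 0 < E := by positivity
  clear_value d E
  have hlhs : Real.exp (-η * x) * (1 + d)⁻¹ = E⁻¹ := by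
    rw [hEdef, mul_inv, show -η*x = -(η*x) by ring, Real.exp_neg]
  have inv_step : ∀ S : ℝ, 0 < S → S ≤ C*E → Real.exp (-η * x) * (1 + d)⁻¹ ≤ C * S⁻¹ := by
    intro S hS hSCE
    rw [hlhs]
    have h1 : (C*E)⁻¹ ≤ S⁻¹ := inv_anti₀ hS hSCE
    have h2 : C * (C*E)⁻¹ ≤ C * S⁻¹ := by gcongr
    have h3 : C * (C*E)⁻¹ = E⁻¹ := by
      rw [mul_inv C E, ← mul_assoc, mul_inv_cancel₀ hC.ne', one_mul]
    calc E⁻¹ = C * (C*E)⁻¹ := h3.symm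
    _ ≤ C * S⁻¹ := h2
  by_cases h : 0 ≤ x ∧ x ≤ A * t
  · -- inner region
    have hxt : x ≤ A * t := h.2
    have hpsi2 : psi2 n a x t = 0 := by
      rw [psi2, ← hAdef, if_pos h]; ring
    set u := 1 + x + t with hudef
    set v := 1 + |x - A*t| with hvdef
    have hu : 0 < u := by positivity
    have hv : 0 < v := by positivity
    have hsqrtuv : 0 < Real.sqrt u * Real.sqrt v := by positivity
    have hterm : u ^ (-(1:ℝ)/2) * v ^ (-(1:ℝ)/2) = (Real.sqrt u * Real.sqrt v)⁻¹ := by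
      rw [show (-(1:ℝ)/2) = -(1/2:ℝ) by norm_num, Real.rpow_neg hu.le, Real.rpow_neg hv.le,
        ← Real.sqrt_eq_rpow, ← Real.sqrt_eq_rpow, mul_inv]
    have hsum : (Real.sqrt u * Real.sqrt v)⁻¹ ≤ psi1 n a x t := by
      rw [psi1, ← hAdef, if_pos h, one_mul, ← hterm]
      have hterm' :
          (if 0 < a (Fin.last n) then
              (1 + |x| + t) ^ (-(1:ℝ)/2) * (1 + |x - a (Fin.last n) * t|) ^ (-(1:ℝ)/2) else 0)
            = u ^ (-(1:ℝ)/2) * v ^ (-(1:ℝ)/2) := by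
        rw [if_pos han, hudef, hvdef, ← hAdef, abs_of_nonneg hx]
      rw [← hterm']
      refine Finset.single_le_sum (f := fun j : Fin (n+1) =>
        if 0 < a j then (1 + |x| + t) ^ (-(1:ℝ)/2) * (1 + |x - a j * t|) ^ (-(1:ℝ)/2) else 0)
        (fun j _ => ?_) (Finset.mem_univ (Fin.last n))
      split
      · positivity
      · exact le_rfl
    have haxd : a₀ * t ≤ x + d := by
      have h1 : abar * t - x ≤ d := by
        have h0 := neg_abs_le (x - abar*t)
        rw [← hddef] at h0; linarith only [h0]
      have h2 : a₀ * t ≤ abar * t := by gcongr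
      linarith only [h1, h2]
    have hMt : t ≤ M * (x + d) := by
      have h1 : x + d ≤ (a₀*M)*(x+d) := le_mul_of_one_le_left (by positivity) hMa
      have h2 : a₀ * t ≤ a₀ * (M*(x+d)) := by
        calc a₀ * t ≤ x + d := haxd
        _ ≤ a₀ * (M*(x+d)) := by rw [← mul_assoc]; exact h1
      exact le_of_mul_le_mul_left h2 ha₀
    have h1t : 1 + t ≤ M * ((1+x)*(1+d)) := by
      nlinarith only [hMt, hM1, mul_nonneg hM0 (mul_nonneg hx hd0)]
    have hx2 : (1+x)^2 ≤ K * Real.exp (η*x) := key x hx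
    set P := M * K * E with hPdef
    have hP : 0 < P := by positivity
    clear_value P
    have hW : (1+x)*(1+t) ≤ P := by
      calc (1+x)*(1+t) ≤ (1+x) * (M*((1+x)*(1+d))) := by
            apply mul_le_mul_of_nonneg_left h1t (by linarith only [hx])
      _ = M * (1+x)^2 * (1+d) := by ring
      _ ≤ M * (K * Real.exp (η*x)) * (1+d) := by gcongr
      _ = P := by rw [hPdef, hEdef]; ring
    have huW : u ≤ P := by
      have h0 : u ≤ (1+x)*(1+t) := by rw [hudef]; nlinarith only [mul_nonneg hx ht]
      linarith only [h0, hW]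
    have hvW : v ≤ (1+A) * P := by
      have h1 : |x - A*t| = A*t - x := by
        rw [abs_of_nonpos (by linarith only [hxt])]; ring
      have h2 : v ≤ (1+A)*((1+x)*(1+t)) := by
        rw [hvdef, h1]
        nlinarith only [hx, ht, hA.le, mul_nonneg hx ht, mul_nonneg hA.le hx,
          mul_nonneg (mul_nonneg hA.le hx) ht]
      calc v ≤ (1+A)*((1+x)*(1+t)) := h2
      _ ≤ (1+A) * P := mul_le_mul_of_nonneg_left hW (by linarith only [hA.le])
    have huv : u * v ≤ (C*E)^2 := by
      have h1 : u * v ≤ (1+A) * P^2 := by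
        calc u * v ≤ P * ((1+A)*P) := mul_le_mul huW hvW hv.le hP.le
        _ = (1+A) * P^2 := by ring
      have h2 : (1+A) * P^2 ≤ ((1+A)*P)^2 := by
        nlinarith only [mul_nonneg hA.le (sq_nonneg P),
          mul_nonneg (mul_nonneg hA.le hA.le) (sq_nonneg P)]
      have h3 : (1+A)*P = C₁ * E := by rw [hPdef, hC₁def]; ring
      have h4 : C₁ * E ≤ C * E := by gcongr
      have h5 : ((1+A)*P)^2 ≤ (C*E)^2 := by
        rw [h3]; apply pow_le_pow_left₀ (by positivity) h4
      linarith only [h1, h2, h5]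
    have hmain : Real.sqrt u * Real.sqrt v ≤ C * E := by
      rw [← Real.sqrt_mul hu.le]
      calc Real.sqrt (u*v) ≤ Real.sqrt ((C*E)^2) := Real.sqrt_le_sqrt huv
      _ = C*E := Real.sqrt_sq (by positivity)
    have := inv_step (Real.sqrt u * Real.sqrt v) hsqrtuv hmain
    calc Real.exp (-η * x) * (1 + d)⁻¹ ≤ C * (Real.sqrt u * Real.sqrt v)⁻¹ := this
    _ ≤ C * (psi1 n a x t + psi2 n a x t) := by
        apply mul_le_mul_of_nonneg_left _ hC.le
        rw [hpsi2]; linarith only [hsum]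
  · -- outer region
    have hxt : A * t < x := by
      by_contra hcon
      push_neg at hcon
      exact h ⟨hx, hcon⟩
    have hpsi1 : psi1 n a x t = 0 := by
      rw [psi1, ← hAdef, if_neg h, zero_mul]
    set s := 1 + |x - A*t| + t ^ ((1:ℝ)/2) with hsdef
    have hrt0 : 0 ≤ t ^ ((1:ℝ)/2) := Real.rpow_nonneg ht _
    have hs1 : (1:ℝ) ≤ s := by
      rw [hsdef]; linarith only [abs_nonneg (x - A*t), hrt0]
    have hs : 0 < s := by linarith only [hs1]
    have hpsi2 : psi2 n a x t = (s ^ ((3:ℝ)/2))⁻¹ := by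
      rw [psi2, ← hAdef, if_neg h, ← hsdef,
        show (-(3:ℝ)/2) = -((3:ℝ)/2) by ring, Real.rpow_neg hs.le]
      ring
    have hmain : s ^ ((3:ℝ)/2) ≤ C * E := by
      have h32 : s ^ ((3:ℝ)/2) ≤ s^2 := by
        calc s ^ ((3:ℝ)/2) ≤ s ^ (2:ℝ) :=
              Real.rpow_le_rpow_of_exponent_le hs1 (by norm_num)
        _ = s^2 := by rw [← Real.rpow_natCast s 2]; norm_num
      have hrt : t ^ ((1:ℝ)/2) ≤ 1 + t := by
        rw [← Real.sqrt_eq_rpow]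
        nlinarith only [Real.sq_sqrt ht, Real.sqrt_nonneg t,
          sq_nonneg (Real.sqrt t - 1)]
      have htAx : t ≤ A⁻¹ * x := by
        calc t = A⁻¹ * (A*t) := by field_simp
        _ ≤ A⁻¹ * x := mul_le_mul_of_nonneg_left hxt.le (inv_nonneg.2 hA.le)
      have habs : |x - A*t| = x - A*t := abs_of_nonneg (by linarith only [hxt])
      have hsB : s ≤ 2*(1+A⁻¹)*(1+x) := by
        rw [hsdef, habs]
        have h1 : 0 ≤ A*t := mul_nonneg hA.le ht
        have h2 : 0 ≤ A⁻¹ := inv_nonneg.2 hA.le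
        have h3 : 0 ≤ A⁻¹ * x := mul_nonneg h2 hx
        linarith only [hrt, htAx, h1, h2, h3, hx]
      have hsq : s^2 ≤ C₂ * Real.exp (η*x) := by
        calc s^2 ≤ (2*(1+A⁻¹)*(1+x))^2 := pow_le_pow_left₀ hs.le hsB 2
        _ = (2*(1+A⁻¹))^2 * (1+x)^2 := by ring
        _ ≤ (2*(1+A⁻¹))^2 * (K * Real.exp (η*x)) := by gcongr; exact key x hx
        _ = C₂ * Real.exp (η*x) := by rw [hC₂def]; ring
      have hEE : C₂ * Real.exp (η*x) ≤ C * E := by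
        calc C₂ * Real.exp (η*x) ≤ C * Real.exp (η*x) := by gcongr
        _ ≤ C * E := by
              rw [hEdef]
              apply mul_le_mul_of_nonneg_left _ hC.le
              nlinarith only [mul_nonneg (Real.exp_pos (η*x)).le hd0]
      exact h32.trans (hsq.trans hEE)
    have hpow : 0 < s ^ ((3:ℝ)/2) := Real.rpow_pos_of_pos hs _
    have := inv_step (s ^ ((3:ℝ)/2)) hpow hmain
    calc Real.exp (-η * x) * (1 + d)⁻¹ ≤ C * (s ^ ((3:ℝ)/2))⁻¹ := this
    _ ≤ C * (psi1 n a x t + psi2 n a x t) := by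
        rw [hpsi1, hpsi2]; simp
end

section
/- Fix a real constant a_n > 0 and real constants a₁ < ⋯ < a_n with at least one a_j > 0. Define ψ₁(x,t) := χ(x,t) Σ_{j : a_j > 0} (1 + |x| + t)^{−1/2} (1 + |x − a_j t|)^{−1/2} and ψ₂(x,t) := (1 − χ(x,t)) (1 + |x − a_n t| + t^{1/2})^{−3/2}, where χ(x,t) = 1 if 0 ≤ x ≤ a_n t and χ(x,t) = 0 otherwise. Then there exists a constant C > 0 such that for all x ≥ 0 and t ≥ 0, (1 + t)^{−1} (1 + x)^{−2} ≤ C (ψ₁ + ψ₂)(x,t). -/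
open Real Set

lemma inv_le_rpow_neg_half {p q : ℝ} (hp : 0 < p) (hq : 0 < q) (h : p ≤ q ^ 2) :
    q⁻¹ ≤ p ^ (-(1:ℝ)/2) := by
  have hq2 : (q ^ 2 : ℝ) ^ ((1:ℝ)/2) = q := by
    rw [← Real.rpow_natCast q 2, ← Real.rpow_mul hq.le]
    norm_num
  have h1 : p ^ ((1:ℝ)/2) ≤ q := by
    calc p ^ ((1:ℝ)/2) ≤ (q ^ 2) ^ ((1:ℝ)/2) :=
          Real.rpow_le_rpow hp.le h (by norm_num)
      _ = q := hq2
  have h2 : p ^ (-(1:ℝ)/2) = (p ^ ((1:ℝ)/2))⁻¹ := by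
    rw [← Real.rpow_neg hp.le]; norm_num
  rw [h2]
  exact inv_anti₀ (Real.rpow_pos_of_pos hp _) h1

set_option maxHeartbeats 1600000 in
/-- Boundary estimate II: `(1+t)^{−1}(1+x)^{−2} ≤ C (ψ₁ + ψ₂)(x,t)`. -/
theorem boundary_singular_slab_dominated (n : ℕ) (a : Fin (n + 1) → ℝ) (ha : StrictMono a)
    (han : 0 < a (Fin.last n)) (hpos : ∃ j, 0 < a j) :
    ∃ C : ℝ, 0 < C ∧ ∀ x ≥ (0:ℝ), ∀ t ≥ (0:ℝ),
      (1 + t)⁻¹ * ((1 + x) ^ 2)⁻¹ ≤ C * (psi1 n a x t + psi2 n a x t) := by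
  set A := a (Fin.last n) with hAdef
  refine ⟨2 * (1 + A), by nlinarith, ?_⟩
  intro x hx t ht
  have hx1 : (0:ℝ) < 1 + x := by linarith
  have ht1 : (0:ℝ) < 1 + t := by linarith
  have hA1 : (0:ℝ) < 1 + A := by linarith
  by_cases hcase : 0 ≤ x ∧ x ≤ A * t
  · -- inner region
    have hψ2 : psi2 n a x t = 0 := by
      unfold psi2; rw [if_pos hcase]; ring
    have habs1 : |x| = x := abs_of_nonneg hx
    have habs2 : |x - A * t| = A * t - x := by
      rw [abs_of_nonpos (by linarith [hcase.2])]; ring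
    set P : ℝ := (1 + x + t) * (1 + (A * t - x)) with hPdef
    clear_value P
    have hP : (0:ℝ) < P := by
      rw [hPdef]
      apply mul_pos <;> nlinarith [hcase.1, hcase.2]
    set Q : ℝ := (1 + A) * (1 + x) ^ 2 * (1 + t) with hQdef
    clear_value Q
    have hQ : (0:ℝ) < Q := by rw [hQdef]; positivity
    have hPQ : P ≤ Q ^ 2 := by
      have h1 : 1 + x + t ≤ (1 + x) * (1 + t) := by nlinarith
      have h2 : 1 + (A * t - x) ≤ (1 + A) * (1 + t) := by nlinarith [hcase.1]
      have h3 : P ≤ (1 + x) * (1 + t) * ((1 + A) * (1 + t)) := by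
        rw [hPdef]
        apply mul_le_mul h1 h2 (by nlinarith [hcase.1, hcase.2]) (by positivity)
      have hx3 : (1:ℝ) ≤ (1 + x) ^ 3 := one_le_pow₀ (by linarith)
      have hone : (1:ℝ) ≤ (1 + A) * (1 + x) ^ 3 := by nlinarith
      have h4 : (1 + x) * (1 + t) * ((1 + A) * (1 + t))
          ≤ (1 + x) * (1 + t) * ((1 + A) * (1 + t)) * ((1 + A) * (1 + x) ^ 3) :=
        le_mul_of_one_le_right (by positivity) hone
      have h5 : (1 + x) * (1 + t) * ((1 + A) * (1 + t)) * ((1 + A) * (1 + x) ^ 3)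
          = Q ^ 2 := by rw [hQdef]; ring
      linarith
    have hinv : Q⁻¹ ≤ P ^ (-(1:ℝ)/2) := inv_le_rpow_neg_half hP hQ hPQ
    have hterm : P ^ (-(1:ℝ)/2) ≤ psi1 n a x t := by
      have hmul : P ^ (-(1:ℝ)/2)
          = (1 + |x| + t) ^ (-(1:ℝ)/2) * (1 + |x - A * t|) ^ (-(1:ℝ)/2) := by
        rw [habs1, habs2, hPdef, Real.mul_rpow (by nlinarith [hcase.1]) (by nlinarith [hcase.2])]
      unfold psi1
      rw [if_pos hcase, one_mul, hmul]
      have hb1 : (0:ℝ) ≤ 1 + |x| + t := by have := abs_nonneg x; linarith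
      have := Finset.single_le_sum
        (f := fun j : Fin (n + 1) =>
          if 0 < a j then (1 + |x| + t) ^ (-(1:ℝ)/2) * (1 + |x - a j * t|) ^ (-(1:ℝ)/2) else 0)
        (fun j _ => by
          split
          · exact mul_nonneg (Real.rpow_nonneg hb1 _)
              (Real.rpow_nonneg (by positivity) _)
          · exact le_rfl)
        (Finset.mem_univ (Fin.last n))
      simpa [← hAdef, if_pos han] using this
    have hQinv : 2 * (1 + A) * Q⁻¹ = 2 * ((1 + x) ^ 2)⁻¹ * (1 + t)⁻¹ := by
      rw [hQdef]; field_simp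
    calc (1 + t)⁻¹ * ((1 + x) ^ 2)⁻¹
        ≤ 2 * ((1 + x) ^ 2)⁻¹ * (1 + t)⁻¹ := by
          have : (0:ℝ) ≤ ((1 + x) ^ 2)⁻¹ * (1 + t)⁻¹ := by positivity
          nlinarith
      _ = 2 * (1 + A) * Q⁻¹ := hQinv.symm
      _ ≤ 2 * (1 + A) * (P ^ (-(1:ℝ)/2)) := by
          apply mul_le_mul_of_nonneg_left hinv (by positivity)
      _ ≤ 2 * (1 + A) * psi1 n a x t := by
          apply mul_le_mul_of_nonneg_left hterm (by positivity)
      _ = 2 * (1 + A) * (psi1 n a x t + psi2 n a x t) := by rw [hψ2]; ring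
  · -- outer region
    have hxgt : A * t < x := by
      rcases not_and_or.mp hcase with h | h
      · exact absurd hx h
      · exact lt_of_not_ge h
    have habs : |x - A * t| = x - A * t := abs_of_nonneg (by linarith)
    set s : ℝ := t ^ ((1:ℝ)/2) with hsdef
    have hs : 0 ≤ s := Real.rpow_nonneg ht _
    have hs2 : s ^ 2 = t := by
      rw [hsdef, ← Real.rpow_natCast (t ^ ((1:ℝ)/2)) 2, ← Real.rpow_mul ht]
      norm_num
    clear_value s
    set R : ℝ := 1 + (x - A * t) + s with hRdef
    clear_value R
    have hR : (0:ℝ) < R := by rw [hRdef]; nlinarith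
    have hAt : 0 ≤ A * t := mul_nonneg han.le ht
    set Q : ℝ := 2 * (1 + x) ^ 2 * (1 + t) with hQdef
    clear_value Q
    have hQ : (0:ℝ) < Q := by rw [hQdef]; positivity
    have hRQ : R ^ 3 ≤ Q ^ 2 := by
      have h1 : R ≤ (1 + x) * (1 + s) := by rw [hRdef]; nlinarith
      have h2 : (1 + s) ^ 2 ≤ 2 * (1 + t) := by nlinarith [sq_nonneg (1 - s)]
      have h3 : R ^ 3 ≤ ((1 + x) * (1 + s)) ^ 3 :=
        pow_le_pow_left₀ hR.le h1 3
      have hbase : (1:ℝ) ≤ (1 + x) * (1 + s) := by nlinarith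
      have h4 : ((1 + x) * (1 + s)) ^ 3 ≤ ((1 + x) * (1 + s)) ^ 4 :=
        pow_le_pow_right₀ hbase (by norm_num)
      have h6 : ((1 + s) ^ 2) ^ 2 ≤ (2 * (1 + t)) ^ 2 :=
        pow_le_pow_left₀ (by positivity) h2 2
      calc R ^ 3 ≤ ((1 + x) * (1 + s)) ^ 4 := le_trans h3 h4
        _ = (1 + x) ^ 4 * ((1 + s) ^ 2) ^ 2 := by ring
        _ ≤ (1 + x) ^ 4 * (2 * (1 + t)) ^ 2 := by
            exact mul_le_mul_of_nonneg_left h6 (by positivity)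
        _ = Q ^ 2 := by rw [hQdef]; ring
    have hR3 : (0:ℝ) < R ^ 3 := by positivity
    have hinv : Q⁻¹ ≤ (R ^ 3 : ℝ) ^ (-(1:ℝ)/2) := inv_le_rpow_neg_half hR3 hQ hRQ
    have hRpow : (R ^ 3 : ℝ) ^ (-(1:ℝ)/2) = R ^ (-(3:ℝ)/2) := by
      rw [← Real.rpow_natCast R 3, ← Real.rpow_mul hR.le]
      norm_num
    have hψ2 : psi2 n a x t = R ^ (-(3:ℝ)/2) := by
      unfold psi2
      rw [if_neg hcase, habs, hRdef, hsdef]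
      norm_num
    have hψ1 : psi1 n a x t = 0 := by
      unfold psi1; rw [if_neg hcase]; ring
    have key : (1 + t)⁻¹ * ((1 + x) ^ 2)⁻¹ = 2 * Q⁻¹ := by
      rw [hQdef]; field_simp
    calc (1 + t)⁻¹ * ((1 + x) ^ 2)⁻¹
        = 2 * Q⁻¹ := key
      _ ≤ 2 * (R ^ (-(3:ℝ)/2)) := by
          rw [← hRpow]
          exact mul_le_mul_of_nonneg_left hinv (by norm_num)
      _ ≤ 2 * (1 + A) * (R ^ (-(3:ℝ)/2)) := by
          have hRp : (0:ℝ) ≤ R ^ (-(3:ℝ)/2) := Real.rpow_nonneg hR.le _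
          nlinarith
      _ = 2 * (1 + A) * (psi1 n a x t + psi2 n a x t) := by
          rw [hψ1, hψ2]; ring
end
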